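/- arXiv:1711.00945 — 5 statements merged into one kernel-verified Lean document; each statement's English description precedes it below -/
import Mathlib

section
/- For all n ≥ 0, the coefficients of D_{2n}(a) as a polynomial in a are nonnegative integers. -/
open Polynomial

/-- The adsorbing Dyck path partition function `D_{2n}(a)` as a polynomial in `a` over `ℚ`. -/
noncomputable def dyckPoly (n : ℕ) : Polynomial ℚ :=
  ∑ ℓ ∈ Finset.range (n + 1),
    Polynomial.C (((2 * ℓ + 1 : ℚ) / (n + ℓ + 1)) * (Nat.choose (2 * n) (n + ℓ) : ℚ)) *
      (Polynomial.X - 1) ^ ℓ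

/-- The coefficient of `a^k` in `D_{2n}(a)`, as a natural number. -/
def dyckN (n k : ℕ) : ℕ := (2*n-1-k).choose (n-1) - (2*n-1-k).choose n

lemma dyckN_le (n k : ℕ) (hn : 1 ≤ n) :
    (2*n-1-k).choose n ≤ (2*n-1-k).choose (n-1) := by
  have h := Nat.choose_succ_right_eq (2*n-1-k) (n-1)
  have hn1 : n - 1 + 1 = n := by omega
  rw [hn1] at h
  have hle : 2*n-1-k - (n-1) ≤ n := by omega
  have h2 : (2*n-1-k).choose n * n ≤ (2*n-1-k).choose (n-1) * n := by
    rw [h]; exact Nat.mul_le_mul le_rfl hle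
  exact Nat.le_of_mul_le_mul_right h2 (by omega)

/-- Vandermonde-type convolution of binomial coefficients. -/
lemma conv (l M : ℕ) : ∀ m, ∑ k ∈ Finset.range (M+1), k.choose l * ((M-k).choose m)
    = (M+1).choose (l+m+1) := by
  induction M with
  | zero =>
    intro m
    cases l <;> cases m <;> simp [Nat.choose]
  | succ M ih =>
    intro m
    cases m with
    | zero =>
      simp only [Nat.choose_zero_right, mul_one]
      have : ∑ k ∈ Finset.range (M+2), k.choose l = (M+2).choose (l+1) := by
        rw [← Nat.sum_Icc_choose (M+1) l]
        refine (Finset.sum_subset ?_ ?_).symm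
        · intro x hx
          simp only [Finset.mem_Icc] at hx
          simp only [Finset.mem_range]; omega
        · intro x hx hx'
          simp only [Finset.mem_range] at hx
          simp only [Finset.mem_Icc] at hx'
          exact Nat.choose_eq_zero_of_lt (by omega)
      rw [this]
    | succ m =>
      rw [Finset.sum_range_succ]
      have hstep : ∑ k ∈ Finset.range (M+1), k.choose l * ((M+1-k).choose (m+1))
          = ∑ k ∈ Finset.range (M+1),
              (k.choose l * ((M-k).choose m) + k.choose l * ((M-k).choose (m+1))) := by
        apply Finset.sum_congr rfl
        intro k hk
        simp only [Finset.mem_range] at hk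
        have h1 : M+1-k = (M-k)+1 := by omega
        rw [h1, Nat.choose_succ_succ, Nat.mul_add]
      rw [hstep, Finset.sum_add_distrib, ih m, ih (m+1)]
      simp only [Nat.sub_self, Nat.choose_zero_succ, mul_zero, add_zero]
      have e : l + (m+1) + 1 = (l + m + 1) + 1 := by omega
      rw [e, Nat.choose_succ_succ (M+1) (l+m+1)]

lemma sumA (n l : ℕ) (hn : 1 ≤ n) :
    ∑ k ∈ Finset.range (n+1), k.choose l * ((2*n-1-k).choose (n-1))
      = (2*n).choose (n+l) := by
  have h := conv l (2*n-1) (n-1)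
  have h1 : 2*n-1+1 = 2*n := by omega
  have h2 : l + (n-1) + 1 = n + l := by omega
  rw [h1, h2] at h
  rw [← h]
  apply Finset.sum_subset
  · intro x hx; simp only [Finset.mem_range] at *; omega
  · intro x hx hx'
    simp only [Finset.mem_range] at hx hx'
    rw [Nat.choose_eq_zero_of_lt (show 2*n-1-x < n-1 by omega), mul_zero]

lemma sumB (n l : ℕ) (hn : 1 ≤ n) :
    ∑ k ∈ Finset.range (n+1), k.choose l * ((2*n-1-k).choose n)
      = (2*n).choose (n+l+1) := by
  have h := conv l (2*n-1) n
  have h1 : 2*n-1+1 = 2*n := by omega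
  have h2 : l + n + 1 = n + l + 1 := by omega
  rw [h1, h2] at h
  rw [← h]
  apply Finset.sum_subset
  · intro x hx; simp only [Finset.mem_range] at *; omega
  · intro x hx hx'
    simp only [Finset.mem_range] at hx hx'
    rw [Nat.choose_eq_zero_of_lt (show 2*n-1-x < n by omega), mul_zero]

lemma scalarId (n l : ℕ) (hn : 1 ≤ n) (hl : l ≤ n) :
    ∑ k ∈ Finset.range (n+1), (dyckN n k : ℚ) * (k.choose l : ℚ)
      = ((2 * l + 1 : ℚ) / (n + l + 1)) * ((2*n).choose (n+l) : ℚ) := by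
  have hrw : ∀ k, (dyckN n k : ℚ) * (k.choose l : ℚ)
      = (k.choose l : ℚ) * ((2*n-1-k).choose (n-1) : ℚ)
        - (k.choose l : ℚ) * ((2*n-1-k).choose n : ℚ) := by
    intro k
    rw [dyckN, Nat.cast_sub (dyckN_le n k hn)]
    ring
  rw [Finset.sum_congr rfl (fun k _ => hrw k), Finset.sum_sub_distrib]
  have hA : ∑ k ∈ Finset.range (n+1), (k.choose l : ℚ) * ((2*n-1-k).choose (n-1) : ℚ)
      = ((2*n).choose (n+l) : ℚ) := by
    rw [← sumA n l hn]; push_cast; rfl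
  have hB : ∑ k ∈ Finset.range (n+1), (k.choose l : ℚ) * ((2*n-1-k).choose n : ℚ)
      = ((2*n).choose (n+l+1) : ℚ) := by
    rw [← sumB n l hn]; push_cast; rfl
  rw [hA, hB]
  have key : ((2*n).choose (n+l+1) : ℚ) * ((n:ℚ) + l + 1)
      = ((2*n).choose (n+l) : ℚ) * ((n:ℚ) - l) := by
    have h := Nat.choose_succ_right_eq (2*n) (n+l)
    have h2 : 2*n - (n+l) = n - l := by omega
    rw [h2] at h
    have := congrArg (Nat.cast : ℕ → ℚ) h
    push_cast [Nat.cast_sub hl] at this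
    linarith [this]
  have hpos : ((n:ℚ) + l + 1) ≠ 0 := by positivity
  field_simp
  linear_combination -key

lemma dyckPoly_eq (n : ℕ) (hn : 1 ≤ n) :
    dyckPoly n = ∑ k ∈ Finset.range (n+1), Polynomial.C ((dyckN n k : ℚ)) * X ^ k := by
  symm
  calc ∑ k ∈ Finset.range (n+1), Polynomial.C ((dyckN n k : ℚ)) * X ^ k
      = ∑ k ∈ Finset.range (n+1), ∑ l ∈ Finset.range (n+1),
          Polynomial.C ((dyckN n k : ℚ) * (k.choose l : ℚ)) * (X - 1) ^ l := by
        apply Finset.sum_congr rfl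
        intro k hk
        simp only [Finset.mem_range] at hk
        have hXk : (X : ℚ[X]) ^ k = ((X - 1) + 1) ^ k := by ring
        rw [hXk, add_pow, Finset.mul_sum]
        have hcong : ∑ l ∈ Finset.range (k+1),
            Polynomial.C ((dyckN n k : ℚ)) * ((X - 1) ^ l * 1 ^ (k - l) * (k.choose l : ℚ[X]))
            = ∑ l ∈ Finset.range (k+1),
              Polynomial.C ((dyckN n k : ℚ) * (k.choose l : ℚ)) * (X - 1) ^ l := by
          apply Finset.sum_congr rfl
          intro l _
          simp only [map_mul, Polynomial.C_eq_natCast, one_pow, mul_one]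
          ring
        rw [hcong]
        apply Finset.sum_subset
        · intro x hx; simp only [Finset.mem_range] at *; omega
        · intro x hx hx'
          simp only [Finset.mem_range] at hx hx'
          rw [Nat.choose_eq_zero_of_lt (by omega)]
          simp
    _ = ∑ l ∈ Finset.range (n+1),
          Polynomial.C (∑ k ∈ Finset.range (n+1), (dyckN n k : ℚ) * (k.choose l : ℚ))
            * (X - 1) ^ l := by
        rw [Finset.sum_comm]
        apply Finset.sum_congr rfl
        intro l _
        rw [map_sum, Finset.sum_mul]
    _ = dyckPoly n := by
        unfold dyckPoly
        apply Finset.sum_congr rfl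
        intro l hl
        simp only [Finset.mem_range] at hl
        rw [scalarId n l hn (by omega)]

theorem dyckPoly_coeffs_nonneg_integers (n : ℕ) (k : ℕ) :
    ∃ m : ℕ, (dyckPoly n).coeff k = (m : ℚ) := by
  rcases Nat.eq_zero_or_pos n with h | h
  · subst h
    refine ⟨if k = 0 then 1 else 0, ?_⟩
    unfold dyckPoly
    simp [Polynomial.coeff_one]
  · rw [dyckPoly_eq n h]
    refine ⟨if k ≤ n then dyckN n k else 0, ?_⟩
    rw [Polynomial.finset_sum_coeff]
    simp only [Polynomial.coeff_C_mul, Polynomial.coeff_X_pow, mul_ite, mul_one, mul_zero]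
    rw [Finset.sum_ite_eq (Finset.range (n+1)) k (fun j => ((dyckN n j : ℚ)))]
    simp only [Finset.mem_range]
    split_ifs <;> simp_all <;> omega
end

section
/- For a > 2 real, the sequence (1/(2n)) · log D_{2n}(a) converges as n → ∞ to log a − (1/2) log(a−1). -/
open Filter Finset Real

/-- The adsorbing Dyck path partition function `D_{2n}(a)` for real `a`. -/
noncomputable def dyckPF (n : ℕ) (a : ℝ) : ℝ :=
  ∑ ℓ ∈ Finset.range (n + 1),
    ((2 * ℓ + 1 : ℝ) / (n + ℓ + 1)) * (Nat.choose (2 * n) (n + ℓ) : ℝ) * (a - 1) ^ ℓ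

lemma binom_sum_aux (n : ℕ) (t : ℝ) :
    ∑ k ∈ Finset.range (2*n+1), (Nat.choose (2*n) k : ℝ) * t^k = (1+t)^(2*n) := by
  rw [add_comm (1:ℝ) t, add_pow]
  refine Finset.sum_congr rfl fun k hk => ?_
  ring

lemma split_sum_aux (n : ℕ) (f : ℕ → ℝ) :
    ∑ k ∈ Finset.range (2*n+1), f k
      = (∑ k ∈ Finset.range n, f k) + ∑ i ∈ Finset.range (n+1), f (n+i) := by
  rw [← Finset.sum_range_add_sum_Ico f (show n ≤ 2*n+1 by omega),
    Finset.sum_Ico_eq_sum_range]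
  have h : 2*n+1-n = n+1 := by omega
  rw [h]

lemma shifted_sum_le (n : ℕ) (t : ℝ) (ht : 1 ≤ t) :
    (1+t)^(2*n) ≤ 2 * ∑ ℓ ∈ Finset.range (n+1), (Nat.choose (2*n) (n+ℓ) : ℝ) * t^(n+ℓ) := by
  have ht0 : (0:ℝ) ≤ t := by linarith
  set A := ∑ ℓ ∈ Finset.range (n+1), (Nat.choose (2*n) (n+ℓ) : ℝ) * t^(n+ℓ) with hA
  set B := ∑ k ∈ Finset.range n, (Nat.choose (2*n) k : ℝ) * t^k with hB
  have hsplit : (1+t)^(2*n) = B + A := by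
    rw [← binom_sum_aux n t, split_sum_aux n (fun k => (Nat.choose (2*n) k : ℝ) * t^k)]
  have hBA : B ≤ A := by
    have hB' : B = ∑ i ∈ Finset.range n, (Nat.choose (2*n) (n-1-i) : ℝ) * t^(n-1-i) := by
      rw [hB]
      exact (Finset.sum_range_reflect (fun k => (Nat.choose (2*n) k : ℝ) * t^k) n).symm
    have hA' : (∑ i ∈ Finset.range n, (Nat.choose (2*n) (n+(i+1)) : ℝ) * t^(n+(i+1))) ≤ A := by
      rw [hA, Finset.sum_range_succ']
      have : (0:ℝ) ≤ (Nat.choose (2*n) (n+0) : ℝ) * t^(n+0) := by positivity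
      linarith
    refine le_trans ?_ hA'
    rw [hB']
    refine Finset.sum_le_sum fun i hi => ?_
    simp only [Finset.mem_range] at hi
    have hc : Nat.choose (2*n) (n-1-i) = Nat.choose (2*n) (n+(i+1)) := by
      rw [show n-1-i = 2*n - (n+(i+1)) by omega]
      exact Nat.choose_symm (by omega)
    rw [hc]
    have : t^(n-1-i) ≤ t^(n+(i+1)) := pow_le_pow_right₀ ht (by omega)
    have hnn : (0:ℝ) ≤ (Nat.choose (2*n) (n+(i+1)) : ℝ) := by positivity
    nlinarith
  linarith

lemma dyckPF_upper (a : ℝ) (ha : 2 < a) (n : ℕ) :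
    dyckPF n a ≤ 2 * (a^2/(a-1))^n := by
  have ht : (1:ℝ) < a - 1 := by linarith
  have ht0 : (0:ℝ) < a - 1 := by linarith
  have step1 : dyckPF n a ≤ ∑ ℓ ∈ Finset.range (n+1), 2 * ((Nat.choose (2*n) (n+ℓ) : ℝ) * (a-1)^ℓ) := by
    refine Finset.sum_le_sum fun ℓ hℓ => ?_
    have hden : (0:ℝ) < (n:ℝ) + ℓ + 1 := by positivity
    have h1 : ((2*ℓ+1:ℝ)/((n:ℝ)+ℓ+1)) ≤ 2 := by
      rw [div_le_iff₀ hden]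
      have : (0:ℝ) ≤ (n:ℝ) := Nat.cast_nonneg n
      have : (0:ℝ) ≤ (ℓ:ℝ) := Nat.cast_nonneg ℓ
      nlinarith
    have hnn : (0:ℝ) ≤ (Nat.choose (2*n) (n+ℓ) : ℝ) * (a-1)^ℓ := by positivity
    calc ((2*ℓ+1:ℝ)/((n:ℝ)+ℓ+1)) * (Nat.choose (2*n) (n+ℓ) : ℝ) * (a-1)^ℓ
        = ((2*ℓ+1:ℝ)/((n:ℝ)+ℓ+1)) * ((Nat.choose (2*n) (n+ℓ) : ℝ) * (a-1)^ℓ) := by ring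
      _ ≤ 2 * ((Nat.choose (2*n) (n+ℓ) : ℝ) * (a-1)^ℓ) := mul_le_mul_of_nonneg_right h1 hnn
  have step2 : (∑ ℓ ∈ Finset.range (n+1), (Nat.choose (2*n) (n+ℓ) : ℝ) * (a-1)^ℓ) * (a-1)^n
      ≤ (1+(a-1))^(2*n) := by
    rw [Finset.sum_mul, ← binom_sum_aux n (a-1),
      split_sum_aux n (fun k => (Nat.choose (2*n) k : ℝ) * (a-1)^k)]
    have h1 : ∑ ℓ ∈ Finset.range (n+1), (Nat.choose (2*n) (n+ℓ) : ℝ) * (a-1)^ℓ * (a-1)^n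
        = ∑ ℓ ∈ Finset.range (n+1), (Nat.choose (2*n) (n+ℓ) : ℝ) * (a-1)^(n+ℓ) := by
      refine Finset.sum_congr rfl fun ℓ hℓ => ?_
      rw [pow_add]; ring
    rw [h1]
    have h2 : (0:ℝ) ≤ ∑ k ∈ Finset.range n, (Nat.choose (2*n) k : ℝ) * (a-1)^k := by
      refine Finset.sum_nonneg fun k hk => by positivity
    linarith
  have hpow : (a^2/(a-1))^n = (1+(a-1))^(2*n) / (a-1)^n := by
    rw [show (1:ℝ)+(a-1) = a by ring, div_pow, ← pow_mul]
  calc dyckPF n a ≤ ∑ ℓ ∈ Finset.range (n+1), 2 * ((Nat.choose (2*n) (n+ℓ) : ℝ) * (a-1)^ℓ) := step1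
    _ = 2 * ∑ ℓ ∈ Finset.range (n+1), (Nat.choose (2*n) (n+ℓ) : ℝ) * (a-1)^ℓ := by
        rw [Finset.mul_sum]
    _ ≤ 2 * ((1+(a-1))^(2*n) / (a-1)^n) := by
        have := (le_div_iff₀ (show (0:ℝ) < (a-1)^n by positivity)).2 step2
        linarith
    _ = 2 * (a^2/(a-1))^n := by rw [hpow]

lemma dyckPF_lower (a : ℝ) (ha : 2 < a) (n : ℕ) :
    (a^2/(a-1))^n / (2*(2*n+1)) ≤ dyckPF n a := by
  have ht : (1:ℝ) < a - 1 := by linarith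
  have ht0 : (0:ℝ) < a - 1 := by linarith
  have step1 : (∑ ℓ ∈ Finset.range (n+1), (Nat.choose (2*n) (n+ℓ) : ℝ) * (a-1)^ℓ) / (2*n+1)
      ≤ dyckPF n a := by
    rw [Finset.sum_div]
    refine Finset.sum_le_sum fun ℓ hℓ => ?_
    simp only [Finset.mem_range] at hℓ
    have hden : (0:ℝ) < (n:ℝ) + ℓ + 1 := by positivity
    have hden2 : (0:ℝ) < (2*(n:ℝ)+1) := by positivity
    have h1 : (1:ℝ)/(2*(n:ℝ)+1) ≤ ((2*ℓ+1:ℝ)/((n:ℝ)+ℓ+1)) := by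
      rw [div_le_div_iff₀ hden2 hden]
      have h2 : (0:ℝ) ≤ (n:ℝ) := Nat.cast_nonneg n
      have h3 : (0:ℝ) ≤ (ℓ:ℝ) := Nat.cast_nonneg ℓ
      nlinarith
    have hnn : (0:ℝ) ≤ (Nat.choose (2*n) (n+ℓ) : ℝ) * (a-1)^ℓ := by positivity
    calc (Nat.choose (2*n) (n+ℓ) : ℝ) * (a-1)^ℓ / (2*(n:ℝ)+1)
        = (1/(2*(n:ℝ)+1)) * ((Nat.choose (2*n) (n+ℓ) : ℝ) * (a-1)^ℓ) := by ring
      _ ≤ ((2*ℓ+1:ℝ)/((n:ℝ)+ℓ+1)) * ((Nat.choose (2*n) (n+ℓ) : ℝ) * (a-1)^ℓ) :=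
          mul_le_mul_of_nonneg_right h1 hnn
      _ = ((2*ℓ+1:ℝ)/((n:ℝ)+ℓ+1)) * (Nat.choose (2*n) (n+ℓ) : ℝ) * (a-1)^ℓ := by ring
  have step2 : (1+(a-1))^(2*n) / (2 * (a-1)^n)
      ≤ ∑ ℓ ∈ Finset.range (n+1), (Nat.choose (2*n) (n+ℓ) : ℝ) * (a-1)^ℓ := by
    have h := shifted_sum_le n (a-1) ht.le
    have h1 : ∑ ℓ ∈ Finset.range (n+1), (Nat.choose (2*n) (n+ℓ) : ℝ) * (a-1)^(n+ℓ)
        = (∑ ℓ ∈ Finset.range (n+1), (Nat.choose (2*n) (n+ℓ) : ℝ) * (a-1)^ℓ) * (a-1)^n := by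
      rw [Finset.sum_mul]
      refine Finset.sum_congr rfl fun ℓ hℓ => ?_
      rw [pow_add]; ring
    rw [h1] at h
    rw [div_le_iff₀ (by positivity)]
    nlinarith [pow_pos ht0 n]
  have hpow : (a^2/(a-1))^n = (1+(a-1))^(2*n) / (a-1)^n := by
    rw [show (1:ℝ)+(a-1) = a by ring, div_pow, ← pow_mul]
  have key : (a^2/(a-1))^n / (2*(2*(n:ℝ)+1))
      = ((1+(a-1))^(2*n) / (2*(a-1)^n)) / (2*(n:ℝ)+1) := by
    rw [hpow]
    have h1 : (0:ℝ) < (a-1)^n := by positivity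
    have h2 : (0:ℝ) < 2*(n:ℝ)+1 := by positivity
    field_simp
  have hmono : ((1+(a-1))^(2*n) / (2*(a-1)^n)) / (2*(n:ℝ)+1)
      ≤ (∑ ℓ ∈ Finset.range (n+1), (Nat.choose (2*n) (n+ℓ) : ℝ) * (a-1)^ℓ) / (2*(n:ℝ)+1) := by
    gcongr
  calc (a^2/(a-1))^n / (2*(2*(n:ℝ)+1))
      = ((1+(a-1))^(2*n) / (2*(a-1)^n)) / (2*(n:ℝ)+1) := key
    _ ≤ (∑ ℓ ∈ Finset.range (n+1), (Nat.choose (2*n) (n+ℓ) : ℝ) * (a-1)^ℓ) / (2*(n:ℝ)+1) := hmono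
    _ ≤ dyckPF n a := step1

lemma dyckPF_pos (a : ℝ) (ha : 2 < a) (n : ℕ) : 0 < dyckPF n a := by
  have h := dyckPF_lower a ha n
  have h2 : (0:ℝ) < (a^2/(a-1))^n / (2*(2*(n:ℝ)+1)) := by
    have : (0:ℝ) < a - 1 := by linarith
    have : (0:ℝ) < a^2/(a-1) := by positivity
    positivity
  linarith

lemma log_nat_div_tendsto : Tendsto (fun n : ℕ => Real.log n / n) atTop (nhds 0) := by
  have h := Real.isLittleO_log_id_atTop.tendsto_div_nhds_zero
  exact h.comp tendsto_natCast_atTop_atTop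

lemma err_tendsto : Tendsto (fun n : ℕ => Real.log (2*(2*(n:ℝ)+1)) / (2*(n:ℝ))) atTop (nhds 0) := by
  apply squeeze_zero' (g := fun n : ℕ => Real.log n / n)
  · filter_upwards [eventually_ge_atTop 1] with n hn
    have hn1 : (1:ℝ) ≤ (n:ℝ) := by exact_mod_cast hn
    have h1 : (1:ℝ) ≤ 2*(2*(n:ℝ)+1) := by linarith
    have := Real.log_nonneg h1
    positivity
  · filter_upwards [eventually_ge_atTop 6] with n hn
    have hn6 : (6:ℝ) ≤ (n:ℝ) := by exact_mod_cast hn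
    have h1 : 2*(2*(n:ℝ)+1) ≤ (n:ℝ)^2 := by nlinarith
    have h2 : Real.log (2*(2*(n:ℝ)+1)) ≤ Real.log ((n:ℝ)^2) :=
      Real.log_le_log (by linarith) h1
    rw [Real.log_pow] at h2
    push_cast at h2
    have hnpos : (0:ℝ) < (n:ℝ) := by linarith
    rw [div_le_div_iff₀ (by linarith) hnpos]
    nlinarith [Real.log_nonneg (show (1:ℝ) ≤ (n:ℝ) by linarith)]
  · exact log_nat_div_tendsto

theorem dyckPF_free_energy_adsorbed (a : ℝ) (ha : 2 < a) :
    Tendsto (fun n : ℕ => (1 / (2 * n : ℝ)) * Real.log (dyckPF n a)) atTop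
      (nhds (Real.log a - (1 / 2) * Real.log (a - 1))) := by
  have ht0 : (0:ℝ) < a - 1 := by linarith
  have ha0 : (0:ℝ) < a := by linarith
  set c : ℝ := Real.log a - (1 / 2) * Real.log (a - 1) with hc
  have hlogr : Real.log (a^2/(a-1)) = 2 * Real.log a - Real.log (a-1) := by
    rw [Real.log_div (by positivity) (by linarith), Real.log_pow]
    push_cast; ring
  have hrpos : (0:ℝ) < a^2/(a-1) := by positivity
  -- lower and upper comparison sequences
  have hlow : Tendsto (fun n : ℕ => c - Real.log (2*(2*(n:ℝ)+1)) / (2*(n:ℝ))) atTop (nhds c) := by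
    have := tendsto_const_nhds (x := c) (f := atTop (α := ℕ)) |>.sub err_tendsto
    simpa using this
  have hup : Tendsto (fun n : ℕ => c + Real.log 2 / (2*(n:ℝ))) atTop (nhds c) := by
    have h2 : Tendsto (fun n : ℕ => Real.log 2 / (2*(n:ℝ))) atTop (nhds 0) := by
      have := tendsto_const_div_atTop_nhds_zero_nat (Real.log 2 / 2)
      refine this.congr fun n => ?_
      rw [div_div]
    have := tendsto_const_nhds (x := c) (f := atTop (α := ℕ)) |>.add h2
    simpa using this
  refine tendsto_of_tendsto_of_tendsto_of_le_of_le' hlow hup ?_ ?_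
  · filter_upwards [eventually_ge_atTop 1] with n hn
    have hn1 : (1:ℝ) ≤ (n:ℝ) := by exact_mod_cast hn
    have hnpos : (0:ℝ) < 2*(n:ℝ) := by linarith
    have h1 := dyckPF_lower a ha n
    have hden : (0:ℝ) < 2*(2*(n:ℝ)+1) := by linarith
    have hlb : (0:ℝ) < (a^2/(a-1))^n / (2*(2*(n:ℝ)+1)) := by positivity
    have h2 : Real.log ((a^2/(a-1))^n / (2*(2*(n:ℝ)+1))) ≤ Real.log (dyckPF n a) :=
      Real.log_le_log hlb h1
    rw [Real.log_div (by positivity) (by linarith), Real.log_pow] at h2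
    have h3 : (n:ℝ) * Real.log (a^2/(a-1)) - Real.log (2*(2*(n:ℝ)+1))
        ≤ Real.log (dyckPF n a) := by push_cast at h2; linarith
    have h4 : c - Real.log (2*(2*(n:ℝ)+1)) / (2*(n:ℝ))
        ≤ (1 / (2*(n:ℝ))) * Real.log (dyckPF n a) := by
      rw [hc]
      rw [sub_le_iff_le_add]
      have hkey : (1 / (2*(n:ℝ))) * ((n:ℝ) * Real.log (a^2/(a-1)) - Real.log (2*(2*(n:ℝ)+1)))
          ≤ (1 / (2*(n:ℝ))) * Real.log (dyckPF n a) := by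
        apply mul_le_mul_of_nonneg_left h3
        positivity
      have heq : (1 / (2*(n:ℝ))) * ((n:ℝ) * Real.log (a^2/(a-1)) - Real.log (2*(2*(n:ℝ)+1)))
          = (Real.log a - (1/2) * Real.log (a-1)) - Real.log (2*(2*(n:ℝ)+1)) / (2*(n:ℝ)) := by
        rw [hlogr]
        field_simp
      linarith
    exact h4
  · filter_upwards [eventually_ge_atTop 1] with n hn
    have hn1 : (1:ℝ) ≤ (n:ℝ) := by exact_mod_cast hn
    have hnpos : (0:ℝ) < 2*(n:ℝ) := by linarith
    have h1 := dyckPF_upper a ha n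
    have hpos := dyckPF_pos a ha n
    have h2 : Real.log (dyckPF n a) ≤ Real.log (2 * (a^2/(a-1))^n) :=
      Real.log_le_log hpos h1
    rw [Real.log_mul (by norm_num) (by positivity), Real.log_pow] at h2
    have h3 : Real.log (dyckPF n a) ≤ Real.log 2 + (n:ℝ) * Real.log (a^2/(a-1)) := by
      push_cast at h2; linarith
    have hkey : (1 / (2*(n:ℝ))) * Real.log (dyckPF n a)
        ≤ (1 / (2*(n:ℝ))) * (Real.log 2 + (n:ℝ) * Real.log (a^2/(a-1))) := by
      apply mul_le_mul_of_nonneg_left h3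
      positivity
    have heq : (1 / (2*(n:ℝ))) * (Real.log 2 + (n:ℝ) * Real.log (a^2/(a-1)))
        = c + Real.log 2 / (2*(n:ℝ)) := by
      rw [hc, hlogr]
      field_simp
      ring
    linarith
end

section
/- For real a with 0 < a ≤ 2, the sequence (1/(2n)) · log D_{2n}(a) converges as n → ∞ to log 2. -/
open Filter

/-!
Each coefficient telescopes:
`(2ℓ+1)/(n+ℓ+1) · C(2n, n+ℓ) = C(2n, n+ℓ) - C(2n, n+ℓ+1) ≥ 0`.
For `|a - 1| ≤ 1` this bounds `D_{2n}(a)` by the sum of the coefficients, `C(2n, n) ≤ 4 ^ n`.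
Expanding `(a - 1) ^ ℓ` in powers of `a` turns `D_{2n}(a)` into a polynomial in `a` with
nonnegative (ballot-number) coefficients whose linear coefficient is the Catalan number `C_{n-1}`,
so `D_{2n}(a) ≥ a · C_{n-1} ≥ a · 4 ^ (n-1) / (2n²)` for `a > 0`. Hence `D_{2n}(a)` is `4 ^ n` up
to polynomial factors, and `(1 / 2n) log D_{2n}(a) → log 4 / 2 = log 2`.
-/

open Finset Topology

theorem Nat.choose_succ_le_choose_of_le_two_mul_add_one {n k : ℕ} (h : n ≤ 2 * k + 1) :
    n.choose (k + 1) ≤ n.choose k := by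
  refine Nat.le_of_mul_le_mul_right (c := k + 1) ?_ k.succ_pos
  rw [Nat.choose_succ_right_eq]
  exact Nat.mul_le_mul_left _ (by omega)

theorem Nat.succ_mul_cast_choose_sub_choose_succ {R : Type*} [CommRing R] (n k : ℕ) :
    ((k : R) + 1) * (n.choose k - n.choose (k + 1)) = (2 * k + 1 - n) * n.choose k := by
  have h := congrArg (Nat.cast : ℕ → R) (Nat.choose_succ_right_eq n k)
  rcases le_or_gt k n with hk | hk
  · push_cast [Nat.cast_sub hk] at h
    linear_combination -h
  · simp [Nat.choose_eq_zero_of_lt hk, Nat.choose_eq_zero_of_lt (hk.trans k.lt_succ_self)]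

theorem sum_range_choose_sub_mul_add_one_pow {R : Type*} [CommSemiring R] (N r : ℕ) (t : R) :
    ∑ k ∈ range (N + 1), ((N - k).choose r : R) * (t + 1) ^ k
      = ∑ j ∈ range (N + 1), ((N + 1).choose (j + r + 1) : R) * t ^ j := by
  induction N with
  | zero => simp [Nat.choose_succ_succ' 0 r, Nat.choose_eq_zero_of_lt (Nat.succ_pos r)]
  | succ N ih =>
    have hl : ∑ k ∈ range (N + 2), ((N + 1 - k).choose r : R) * (t + 1) ^ k
        = (N + 1).choose r
          + (t + 1) * ∑ k ∈ range (N + 1), ((N - k).choose r : R) * (t + 1) ^ k := by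
      rw [sum_range_succ', mul_sum, add_comm]
      simp only [Nat.add_sub_add_right, Nat.sub_zero, pow_zero, mul_one, pow_succ]
      exact congrArg _ (sum_congr rfl fun k _ => by ring)
    have hr : ∑ j ∈ range (N + 2), ((N + 2).choose (j + r + 1) : R) * t ^ j
        = (N + 1).choose r
          + (t + 1) * ∑ j ∈ range (N + 1), ((N + 1).choose (j + r + 1) : R) * t ^ j := by
      have pascal : ∀ j, ((N + 2).choose (j + r + 1) : R) * t ^ j
          = ((N + 1).choose (j + r) : R) * t ^ j + ((N + 1).choose (j + r + 1) : R) * t ^ j := by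
        intro j; rw [Nat.choose_succ_succ', Nat.cast_add, add_mul]
      rw [sum_congr rfl fun j _ => pascal j, sum_add_distrib, sum_range_succ',
        sum_range_succ _ (N + 1), Nat.choose_eq_zero_of_lt (by omega : N + 1 < N + 1 + r + 1),
        add_mul, one_mul, mul_sum]
      simp only [Nat.cast_zero, zero_mul, add_zero, zero_add, pow_zero, mul_one, pow_succ]
      rw [add_comm _ ((N + 1).choose r : R), add_assoc]
      exact congrArg₂ _ rfl (congrArg₂ _ (sum_congr rfl fun j _ => by ring_nf) rfl)
    rw [hl, ih, hr]

theorem tendsto_add_mul_log_div_natCast (A B : ℝ) :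
    Tendsto (fun n : ℕ => (A + B * Real.log n) / n) atTop (𝓝 0) := by
  have hlog : Tendsto (fun n : ℕ => Real.log n / n) atTop (𝓝 0) := by
    simpa [Function.comp_def] using
      (Real.tendsto_pow_log_div_mul_add_atTop 1 0 1 one_ne_zero).comp tendsto_natCast_atTop_atTop
  simpa [add_div, mul_div_assoc] using
    (tendsto_const_div_atTop_nhds_zero_nat A).add (hlog.const_mul B)

theorem tendsto_log_div_natCast_of_le_of_le {x : ℕ → ℝ} {r c C : ℝ} (hr : 0 < r) (hc : 0 < c)
    (hC : 0 < C) (k : ℕ) (hlow : ∀ᶠ n : ℕ in atTop, c * r ^ n ≤ (n : ℝ) ^ k * x n)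
    (hup : ∀ᶠ n : ℕ in atTop, x n ≤ C * (n : ℝ) ^ k * r ^ n) :
    Tendsto (fun n : ℕ => Real.log (x n) / n) atTop (𝓝 (Real.log r)) := by
  have hlim : ∀ A B : ℝ, Tendsto (fun n : ℕ => Real.log r + (A + B * Real.log n) / n) atTop
      (𝓝 (Real.log r)) := fun A B => by
    simpa using (tendsto_add_mul_log_div_natCast A B).const_add (Real.log r)
  refine tendsto_of_tendsto_of_tendsto_of_le_of_le' (hlim (Real.log c) (-k))
    (hlim (Real.log C) k) ?_ ?_ <;>
    filter_upwards [hlow, hup, eventually_ge_atTop 1] with n hlow hup hn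
  all_goals
    have hn : (0 : ℝ) < n := by exact_mod_cast hn
    have hx : 0 < x n := pos_of_mul_pos_right ((by positivity : 0 < c * r ^ n).trans_le hlow)
      (by positivity)
    rw [add_div' _ _ _ hn.ne', div_le_div_iff_of_pos_right hn]
  · have hlog := Real.log_le_log (by positivity) hlow
    rw [Real.log_mul (by positivity) (by positivity), Real.log_mul (by positivity) (by positivity),
      Real.log_pow, Real.log_pow] at hlog
    linarith
  · have hlog := Real.log_le_log hx hup
    rw [Real.log_mul (by positivity) (by positivity), Real.log_mul (by positivity) (by positivity),
      Real.log_pow, Real.log_pow] at hlog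
    linarith

theorem dyckPF_eq_sum_choose_sub (n : ℕ) (a : ℝ) :
    dyckPF n a = ∑ ℓ ∈ range (n + 1),
      (((2 * n).choose (n + ℓ) : ℝ) - (2 * n).choose (n + ℓ + 1)) * (a - 1) ^ ℓ := by
  refine sum_congr rfl fun ℓ _ => ?_
  have h := Nat.succ_mul_cast_choose_sub_choose_succ (R := ℝ) (2 * n) (n + ℓ)
  push_cast at h
  congr 1
  rw [div_mul_eq_mul_div, div_eq_iff (by positivity)]
  linear_combination -h

theorem dyckPF_le_centralBinom (n : ℕ) {a : ℝ} (ha : |a - 1| ≤ 1) :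
    dyckPF n a ≤ n.centralBinom := by
  have hcoeff : ∀ ℓ, 0 ≤ ((2 * n).choose (n + ℓ) : ℝ) - (2 * n).choose (n + ℓ + 1) := fun ℓ =>
    sub_nonneg.mpr (mod_cast Nat.choose_succ_le_choose_of_le_two_mul_add_one (by omega))
  calc dyckPF n a
      ≤ ∑ ℓ ∈ range (n + 1), (((2 * n).choose (n + ℓ) : ℝ) - (2 * n).choose (n + ℓ + 1)) := by
        rw [dyckPF_eq_sum_choose_sub]
        refine sum_le_sum fun ℓ _ => ?_
        calc _ ≤ (((2 * n).choose (n + ℓ) : ℝ) - (2 * n).choose (n + ℓ + 1)) * |a - 1| ^ ℓ := by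
              rw [← abs_pow]; exact mul_le_mul_of_nonneg_left (le_abs_self _) (hcoeff ℓ)
          _ ≤ _ := mul_le_of_le_one_right (hcoeff ℓ) (pow_le_one₀ (abs_nonneg _) ha)
    _ = n.centralBinom := by
        have h := sum_range_sub' (fun ℓ => ((2 * n).choose (n + ℓ) : ℝ)) (n + 1)
        simp only [← add_assoc, add_zero] at h
        rw [h, Nat.choose_eq_zero_of_lt (by omega : 2 * n < n + n + 1),
          Nat.centralBinom_eq_two_mul_choose, Nat.cast_zero, sub_zero]

/-- The coefficient of `a ^ k` is a ballot number: it counts the Dyck paths of length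
`2 * (m + 1)` with exactly `k` returns to the axis. -/
theorem dyckPF_succ_eq_sum_pow (m : ℕ) (a : ℝ) :
    dyckPF (m + 1) a = ∑ k ∈ range (2 * m + 2),
      (((2 * m + 1 - k).choose m : ℝ) - (2 * m + 1 - k).choose (m + 1)) * a ^ k := by
  have h := fun r => sum_range_choose_sub_mul_add_one_pow (2 * m + 1) r (a - 1)
  simp only [sub_add_cancel] at h
  simp only [sub_mul, sum_sub_distrib, h]
  rw [← sum_sub_distrib, dyckPF_eq_sum_choose_sub]
  refine (sum_subset (range_subset_range.mpr (by omega)) fun j _ hj => ?_).trans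
    (sum_congr rfl fun j _ => ?_)
  · rw [mem_range] at hj
    rw [Nat.choose_eq_zero_of_lt (by omega), Nat.choose_eq_zero_of_lt (by omega)]
    simp
  · rw [← sub_mul, show 2 * (m + 1) = 2 * m + 1 + 1 by ring,
      show m + 1 + j = j + m + 1 by ring, show j + (m + 1) + 1 = j + m + 1 + 1 by ring]

theorem catalan_mul_le_dyckPF_succ (m : ℕ) {a : ℝ} (ha : 0 ≤ a) :
    catalan m * a ≤ dyckPF (m + 1) a := by
  have hcoeff : ∀ k, 0 ≤ ((2 * m + 1 - k).choose m : ℝ) - (2 * m + 1 - k).choose (m + 1) :=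
    fun k => sub_nonneg.mpr (mod_cast Nat.choose_succ_le_choose_of_le_two_mul_add_one (by omega))
  have hcatalan : ((2 * m).choose m : ℝ) - (2 * m).choose (m + 1) = catalan m := by
    have h := Nat.succ_mul_cast_choose_sub_choose_succ (R := ℝ) (2 * m) m
    have hc : ((m : ℝ) + 1) * catalan m = (2 * m).choose m := by
      exact_mod_cast (succ_mul_catalan_eq_centralBinom m).trans
        (Nat.centralBinom_eq_two_mul_choose m)
    push_cast at h
    exact mul_left_cancel₀ (by positivity : (m : ℝ) + 1 ≠ 0) (by linear_combination h - hc)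
  rw [dyckPF_succ_eq_sum_pow]
  calc catalan m * a
      = (((2 * m + 1 - 1).choose m : ℝ) - (2 * m + 1 - 1).choose (m + 1)) * a ^ 1 := by
        rw [Nat.add_sub_cancel, hcatalan, pow_one]
    _ ≤ _ := single_le_sum (fun k _ => mul_nonneg (hcoeff k) (pow_nonneg ha k))
        (mem_range.mpr (by omega))

theorem mul_four_pow_le_dyckPF_succ (m : ℕ) {a : ℝ} (ha : 0 ≤ a) :
    a * 4 ^ m ≤ (2 * m + 1) * (m + 1) * dyckPF (m + 1) a := by
  have hcentral : (4 : ℝ) ^ m ≤ (2 * m + 1) * (m + 1) * catalan m := by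
    have h := Nat.four_pow_le_two_mul_add_one_mul_central_binom m
    rw [← Nat.centralBinom_eq_two_mul_choose, ← succ_mul_catalan_eq_centralBinom,
      ← mul_assoc] at h
    exact_mod_cast h
  calc a * 4 ^ m ≤ a * ((2 * m + 1) * (m + 1) * catalan m) :=
        mul_le_mul_of_nonneg_left hcentral ha
    _ = (2 * m + 1) * (m + 1) * (catalan m * a) := by ring
    _ ≤ _ := mul_le_mul_of_nonneg_left (catalan_mul_le_dyckPF_succ m ha) (by positivity)

theorem dyckPF_free_energy_desorbed (a : ℝ) (ha0 : 0 < a) (ha2 : a ≤ 2) :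
    Tendsto (fun n : ℕ => (1 / (2 * n : ℝ)) * Real.log (dyckPF n a)) atTop
      (nhds (Real.log 2)) := by
  have hlow : ∀ᶠ n : ℕ in atTop, a / 8 * 4 ^ n ≤ (n : ℝ) ^ 2 * dyckPF n a := by
    filter_upwards [eventually_ge_atTop 1] with n hn
    obtain ⟨m, rfl⟩ := Nat.exists_eq_add_of_le' hn
    have h := mul_four_pow_le_dyckPF_succ m ha0.le
    have hD : 0 ≤ dyckPF (m + 1) a :=
      (mul_nonneg (Nat.cast_nonneg _) ha0.le).trans (catalan_mul_le_dyckPF_succ m ha0.le)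
    push_cast
    nlinarith [pow_succ (4 : ℝ) m]
  have hup : ∀ᶠ n : ℕ in atTop, dyckPF n a ≤ 1 * (n : ℝ) ^ 2 * 4 ^ n := by
    filter_upwards [eventually_ge_atTop 1] with n hn
    have ha : |a - 1| ≤ 1 := abs_le.mpr ⟨by linarith, by linarith⟩
    calc dyckPF n a ≤ n.centralBinom := dyckPF_le_centralBinom n ha
      _ ≤ (4 : ℝ) ^ n := mod_cast n.centralBinom_le_four_pow
      _ ≤ 1 * (n : ℝ) ^ 2 * 4 ^ n := by
        rw [one_mul]; exact le_mul_of_one_le_left (by positivity) (one_le_pow₀ (mod_cast hn))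
  have h := (tendsto_log_div_natCast_of_le_of_le (by norm_num) (by positivity) one_pos 2 hlow
    hup).div_const 2
  rw [show Real.log 4 / 2 = Real.log 2 by
    rw [show (4 : ℝ) = 2 ^ 2 by norm_num, Real.log_pow]; ring] at h
  refine h.congr fun n => ?_
  ring
end

section
/- For every ρ ∈ (0,1), the point a(ρ) = 2 e^{2πiρ} + 2 e^{πiρ} √(e^{2πiρ} − 1) satisfies the limaçon equation 4|a(ρ) − 1| = |a(ρ)|². -/
/-! With `w = exp(πiρ)` and `s` any square root of `w² - 1`, the point is `a = 2w(w + s)` and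
`a - 1 = (w + s)²`; since `|w| = 1`, both sides of the limaçon equation equal `4|w + s|²`. -/

open Real

theorem limacon_of_sq_eq_sq_sub_one {w s : ℂ} (hw : ‖w‖ = 1) (hs : s ^ 2 = w ^ 2 - 1) :
    4 * ‖2 * w ^ 2 + 2 * w * s - 1‖ = ‖2 * w ^ 2 + 2 * w * s‖ ^ 2 := by
  have hsub : 2 * w ^ 2 + 2 * w * s - 1 = (w + s) ^ 2 := by linear_combination -hs
  have hfac : 2 * w ^ 2 + 2 * w * s = 2 * w * (w + s) := by ring
  rw [hsub, hfac, norm_pow, norm_mul, norm_mul, hw, Complex.norm_two]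
  ring

theorem Complex.cpow_one_div_two_sq (z : ℂ) : (z ^ ((1 : ℂ) / 2)) ^ 2 = z := by
  rw [one_div]
  exact cpow_ofNat_inv_pow z 2

theorem limacon_alt_parametrization_general (ρ : ℝ) :
    let a : ℂ := 2 * Complex.exp (2 * π * Complex.I * ρ) +
      2 * Complex.exp (π * Complex.I * ρ) *
        (Complex.exp (2 * π * Complex.I * ρ) - 1) ^ ((1 : ℂ) / 2)
    4 * ‖a - 1‖ = ‖a‖ ^ 2 := by
  intro a
  have hw_sq : Complex.exp (2 * π * Complex.I * ρ) = Complex.exp (π * Complex.I * ρ) ^ 2 := by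
    rw [← Complex.exp_nat_mul]
    ring_nf
  have hw_norm : ‖Complex.exp (π * Complex.I * ρ)‖ = 1 := by
    rw [show π * Complex.I * ρ = ((π * ρ : ℝ) : ℂ) * Complex.I by push_cast; ring]
    exact Complex.norm_exp_ofReal_mul_I _
  simp only [a, hw_sq]
  exact limacon_of_sq_eq_sq_sub_one hw_norm (Complex.cpow_one_div_two_sq _)

theorem limacon_alt_parametrization (ρ : ℝ) (hρ : ρ ∈ Set.Ioo (0 : ℝ) 1) :
    let a : ℂ := 2 * Complex.exp (2 * π * Complex.I * ρ) +
      2 * Complex.exp (π * Complex.I * ρ) *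
        (Complex.exp (2 * π * Complex.I * ρ) - 1) ^ ((1 : ℂ) / 2)
    4 * ‖a - 1‖ = ‖a‖ ^ 2 :=
  limacon_alt_parametrization_general ρ
end

section
/- For real a with a > 2, D_{2n}(a)·((a−1)/a²)^n → (a−2)/(a−1) as n → ∞. -/
open Filter

/-!
With `b = a - 1`, the ballot identity
`(2ℓ + 1) / (n + ℓ + 1) · C(2n, n + ℓ) = C(2n, n + ℓ) - C(2n, n + ℓ + 1)`
and summation by parts give
`b · D_{2n}(a) = (b - 1) · ∑_{ℓ ≤ n} C(2n, n + ℓ) b^ℓ + C(2n, n)`.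
After multiplying by `b^n`, the sum is the upper half of the binomial expansion of
`a^{2n} = (b + 1)^{2n}`. The lower half and the central term `C(2n, n) b^n` are at most `(4b)^n`,
which is `o(a^{2n})` because `a² - 4b = (a - 2)² > 0`.
-/

open Finset Topology

theorem mul_sum_range_sub_succ_mul_pow {R : Type*} [CommRing R] (c : ℕ → R) (b : R) (m : ℕ) :
    b * ∑ ℓ ∈ range m, (c ℓ - c (ℓ + 1)) * b ^ ℓ
      = (b - 1) * ∑ ℓ ∈ range m, c ℓ * b ^ ℓ + c 0 - c m * b ^ m := by
  induction m with
  | zero => simp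
  | succ m ih =>
    simp only [sum_range_succ, mul_add, ih]
    ring

theorem add_one_pow_two_mul_eq {R : Type*} [CommSemiring R] (b : R) (n : ℕ) :
    (b + 1) ^ (2 * n) = ∑ k ∈ range n, ((2 * n).choose k : R) * b ^ k
      + b ^ n * ∑ ℓ ∈ range (n + 1), ((2 * n).choose (n + ℓ) : R) * b ^ ℓ := by
  rw [add_pow, show 2 * n + 1 = n + (n + 1) by ring, sum_range_add, mul_sum]
  congr 1 <;> refine sum_congr rfl fun k _ => ?_
  · simp [mul_comm]
  · simp only [one_pow, mul_one, pow_add]; ring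

theorem sum_range_choose_mul_pow_le {R : Type*} [Semiring R] [PartialOrder R] [IsOrderedRing R]
    {b : R} (hb : 1 ≤ b) {N m : ℕ} (hm : m ≤ N + 1) :
    ∑ k ∈ range m, (N.choose k : R) * b ^ k ≤ 2 ^ N * b ^ m := by
  calc ∑ k ∈ range m, (N.choose k : R) * b ^ k
      ≤ ∑ k ∈ range m, (N.choose k : R) * b ^ m :=
        sum_le_sum fun k hk => mul_le_mul_of_nonneg_left
          (pow_le_pow_right₀ hb (mem_range.mp hk).le) (Nat.cast_nonneg _)
    _ ≤ ∑ k ∈ range (N + 1), (N.choose k : R) * b ^ m :=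
        sum_le_sum_of_subset_of_nonneg (range_subset_range.mpr hm) fun _ _ _ => by
          have := zero_le_one.trans hb
          positivity
    _ = 2 ^ N * b ^ m := by rw [← sum_mul, ← Nat.cast_sum, Nat.sum_range_choose, Nat.cast_pow,
          Nat.cast_ofNat]

theorem div_mul_choose_eq_choose_sub_choose_succ {K : Type*} [Field K] [CharZero K]
    {n ℓ : ℕ} (hℓ : ℓ ≤ n) :
    (2 * ℓ + 1 : K) / (n + ℓ + 1) * ((2 * n).choose (n + ℓ) : K)
      = ((2 * n).choose (n + ℓ) : K) - ((2 * n).choose (n + ℓ + 1) : K) := by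
  have hrec : ((2 * n).choose (n + ℓ + 1) : K) * (n + ℓ + 1)
      = ((2 * n).choose (n + ℓ) : K) * (n - ℓ) := by
    have := Nat.choose_succ_right_eq (2 * n) (n + ℓ)
    rw [show 2 * n - (n + ℓ) = n - ℓ by omega] at this
    exact_mod_cast this
  have hpos : (n + ℓ + 1 : K) ≠ 0 := by norm_cast
  rw [div_mul_eq_mul_div, div_eq_iff hpos]
  linear_combination hrec

theorem tendsto_div_pow_nhds_zero_of_le_pow {c d : ℝ} (hc : 0 ≤ c) (hcd : c < d)
    {f : ℕ → ℝ} (hf₀ : ∀ n, 0 ≤ f n) (hf : ∀ n, f n ≤ c ^ n) :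
    Tendsto (fun n => f n / d ^ n) atTop (𝓝 0) := by
  have hd : 0 < d := hc.trans_lt hcd
  refine squeeze_zero (fun n => by have := hf₀ n; positivity) (fun n => ?_)
    (tendsto_pow_atTop_nhds_zero_of_lt_one (div_nonneg hc hd.le) ((div_lt_one hd).mpr hcd))
  rw [div_pow]
  exact div_le_div_of_nonneg_right (hf n) (by positivity)

theorem sub_one_mul_dyckPF (n : ℕ) (a : ℝ) :
    (a - 1) * dyckPF n a
      = (a - 2) * ∑ ℓ ∈ range (n + 1), ((2 * n).choose (n + ℓ) : ℝ) * (a - 1) ^ ℓ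
        + (2 * n).choose n := by
  have hterm : ∀ ℓ ∈ range (n + 1),
      (2 * ℓ + 1 : ℝ) / (n + ℓ + 1) * ((2 * n).choose (n + ℓ) : ℝ) * (a - 1) ^ ℓ
        = (((2 * n).choose (n + ℓ) : ℝ) - ((2 * n).choose (n + (ℓ + 1)) : ℝ))
          * (a - 1) ^ ℓ := fun ℓ hℓ => by
      rw [div_mul_choose_eq_choose_sub_choose_succ (mem_range_succ_iff.mp hℓ), add_assoc]
  rw [dyckPF, sum_congr rfl hterm,
    mul_sum_range_sub_succ_mul_pow (fun ℓ => ((2 * n).choose (n + ℓ) : ℝ)),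
    Nat.choose_eq_zero_of_lt (by omega : 2 * n < n + (n + 1))]
  simp only [Nat.cast_zero, zero_mul, sub_zero, add_zero]
  ring

theorem dyckPF_mul_pow_eq {a : ℝ} (ha₀ : a ≠ 0) (ha₁ : a - 1 ≠ 0) (n : ℕ) :
    dyckPF n a * ((a - 1) / a ^ 2) ^ n
      = ((a - 2) * (1 - (∑ k ∈ range n, ((2 * n).choose k : ℝ) * (a - 1) ^ k) / (a ^ 2) ^ n)
          + (2 * n).choose n * (a - 1) ^ n / (a ^ 2) ^ n) / (a - 1) := by
  have hsplit := add_one_pow_two_mul_eq (a - 1) n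
  rw [sub_add_cancel, pow_mul] at hsplit
  have hD := sub_one_mul_dyckPF n a
  rw [div_pow]
  field_simp
  linear_combination (a - 1) ^ n * hD - (a - 2) * hsplit

theorem dyckPF_asymptotics_adsorbed (a : ℝ) (ha : 2 < a) :
    Tendsto (fun n : ℕ => dyckPF n a * ((a - 1) / a ^ 2) ^ n) atTop
      (nhds ((a - 2) / (a - 1))) := by
  have hb : 1 ≤ a - 1 := by linarith
  have hq : 4 * (a - 1) < a ^ 2 := by nlinarith [sq_pos_of_pos (by linarith : (0 : ℝ) < a - 2)]
  have hlower : Tendsto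
      (fun n => (∑ k ∈ range n, ((2 * n).choose k : ℝ) * (a - 1) ^ k) / (a ^ 2) ^ n)
      atTop (𝓝 0) :=
    tendsto_div_pow_nhds_zero_of_le_pow (by positivity) hq (fun n => by positivity) fun n => by
      rw [mul_pow, show (4 : ℝ) ^ n = 2 ^ (2 * n) by rw [pow_mul]; norm_num]
      exact sum_range_choose_mul_pow_le hb (by omega)
  have hcentral : Tendsto (fun n => ((2 * n).choose n : ℝ) * (a - 1) ^ n / (a ^ 2) ^ n)
      atTop (𝓝 0) :=
    tendsto_div_pow_nhds_zero_of_le_pow (by positivity) hq (fun n => by positivity) fun n => by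
      rw [mul_pow, ← Nat.centralBinom_eq_two_mul_choose]
      gcongr
      exact_mod_cast Nat.centralBinom_le_four_pow n
  have hlim := (((hlower.const_sub 1).const_mul (a - 2)).add hcentral).div_const (a - 1)
  rw [sub_zero, mul_one, add_zero] at hlim
  exact hlim.congr fun n => (dyckPF_mul_pow_eq (by positivity) (by positivity) n).symm
end
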